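/- arXiv:1812.11510 — 2 statements merged into one kernel-verified Lean document; each statement's English description precedes it below -/
import Mathlib

section
/- In a residuated lattice, for any subset X of A, the filter generated by X equals the intersection of all prime filters containing X. -/
universe u

class ResiduatedLattice (A : Type u) extends Lattice A, BoundedOrder A where
  mul : A → A → A
  himp : A → A → A
  mul_comm : ∀ x y : A, mul x y = mul y x
  mul_assoc : ∀ x y z : A, mul (mul x y) z = mul x (mul y z)
  mul_top : ∀ x : A, mul x ⊤ = x
  adjoint : ∀ x y z : A, mul x y ≤ z ↔ x ≤ himp y z

namespace RL

variable {A : Type u} [ResiduatedLattice A]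

/-- A filter: a nonempty subset closed under the monoid operation `⊙` and closed
under joins with arbitrary elements. -/
def IsFilter (F : Set A) : Prop :=
  F.Nonempty ∧ (∀ x ∈ F, ∀ y ∈ F, ResiduatedLattice.mul x y ∈ F) ∧
    (∀ x ∈ F, ∀ y : A, x ⊔ y ∈ F)

/-- A prime filter: a proper filter such that `x ⊔ y ∈ P` implies `x ∈ P` or `y ∈ P`. -/
def IsPrime (P : Set A) : Prop :=
  IsFilter P ∧ P ≠ Set.univ ∧ ∀ x y : A, x ⊔ y ∈ P → x ∈ P ∨ y ∈ P

/-- The filter generated by a subset `X`. -/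
def Fgen (X : Set A) : Set A := ⋂₀ {G : Set A | IsFilter G ∧ X ⊆ G}

/-- An `X`-minimal prime filter: a minimal element of the set of prime filters containing `X`. -/
def MinPrimeOver (X : Set A) (P : Set A) : Prop :=
  IsPrime P ∧ X ⊆ P ∧ ∀ Q : Set A, IsPrime Q → X ⊆ Q → Q ⊆ P → Q = P

/-- A minimal prime filter. -/
def MinPrime (P : Set A) : Prop :=
  IsPrime P ∧ ∀ Q : Set A, IsPrime Q → Q ⊆ P → Q = P

/-- The coannihilator of `X` belonging to `F`. -/
def coann (F : Set A) (X : Set A) : Set A := {a : A | ∀ x ∈ X, x ⊔ a ∈ F}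

/-- `X^⊥ = {a | x ⊔ a = ⊤ for all x ∈ X}`. -/
def perp (X : Set A) : Set A := {a : A | ∀ x ∈ X, x ⊔ a = ⊤}

/-- `D_F(P) = {a | (F : a) ⊄ P}`. -/
def DF (F P : Set A) : Set A := {a : A | ¬ coann F {a} ⊆ P}

/-- A `∨`-closed subset: nonempty and closed under joins. -/
def VClosed (C : Set A) : Prop := C.Nonempty ∧ ∀ x ∈ C, ∀ y ∈ C, x ⊔ y ∈ C

end RL

/-
The inclusion `Fgen X ⊆ P` is immediate for every filter `P ⊇ X`. Conversely, if `a ∉ Fgen X`,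
Zorn's lemma gives a filter `m ⊇ X` maximal among those avoiding `a`, and `m` is prime: if
`x, y ∉ m`, maximality puts `a` into the filters generated by `m ∪ {x}` and `m ∪ {y}`, i.e.
`p ⊙ xⁿ ≤ a` and `q ⊙ yᵏ ≤ a` for some `p, q ∈ m`. Since `(x ⊔ y)ⁿᵏ ≤ xⁿ ⊔ yᵏ` in any residuated
lattice, `x ⊔ y ∈ m` would give `p ⊙ q ⊙ (x ⊔ y)ⁿᵏ ∈ m` below `a`.
-/

namespace RL

variable {A : Type u} [ResiduatedLattice A]

/-- From here on `x * y` is `x ⊙ y` and `1` is `⊤`. -/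
abbrev commMonoid : CommMonoid A where
  mul := ResiduatedLattice.mul
  one := ⊤
  mul_assoc := ResiduatedLattice.mul_assoc
  one_mul x := (ResiduatedLattice.mul_comm _ _).trans (ResiduatedLattice.mul_top x)
  mul_one := ResiduatedLattice.mul_top
  mul_comm := ResiduatedLattice.mul_comm

attribute [local instance] commMonoid

instance : IsOrderedMonoid A where
  mul_le_mul_left x y hxy z :=
    (ResiduatedLattice.adjoint x z (y * z)).mpr
      (hxy.trans ((ResiduatedLattice.adjoint y z (y * z)).mp le_rfl))

theorem mul_le_left (x y : A) : x * y ≤ x :=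
  mul_le_of_le_one_right' le_top

theorem mul_le_right (x y : A) : x * y ≤ y :=
  mul_le_of_le_one_left' le_top

theorem sup_mul (x y z : A) : (x ⊔ y) * z = x * z ⊔ y * z := by
  refine le_antisymm ((ResiduatedLattice.adjoint _ _ _).mpr (sup_le ?_ ?_))
    (sup_le (mul_le_mul_left le_sup_left z) (mul_le_mul_left le_sup_right z))
  · exact (ResiduatedLattice.adjoint _ _ _).mp le_sup_left
  · exact (ResiduatedLattice.adjoint _ _ _).mp le_sup_right

theorem mul_sup (x y z : A) : x * (y ⊔ z) = x * y ⊔ x * z := by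
  simp only [mul_comm x, sup_mul]

theorem sup_mul_sup_le (a b c : A) : (a ⊔ b) * (a ⊔ c) ≤ a ⊔ b * c := by
  rw [sup_mul, mul_sup, mul_sup]
  exact sup_le (sup_le (le_sup_of_le_left (mul_le_left a a)) (le_sup_of_le_left (mul_le_left a c)))
    (sup_le_sup_right (mul_le_right b a) _)

theorem sup_pow_le (a b : A) (n : ℕ) : (a ⊔ b) ^ n ≤ a ⊔ b ^ n := by
  induction n with
  | zero => exact le_sup_of_le_right le_rfl
  | succ n ih =>
    calc (a ⊔ b) ^ (n + 1) = (a ⊔ b) ^ n * (a ⊔ b) := pow_succ _ _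
      _ ≤ (a ⊔ b ^ n) * (a ⊔ b) := mul_le_mul_left ih _
      _ ≤ a ⊔ b ^ (n + 1) := (sup_mul_sup_le a _ b).trans_eq (by rw [pow_succ])

theorem sup_pow_mul_le (x y : A) (n k : ℕ) : (x ⊔ y) ^ (n * k) ≤ x ^ n ⊔ y ^ k :=
  calc (x ⊔ y) ^ (n * k) = ((y ⊔ x) ^ n) ^ k := by rw [sup_comm, pow_mul]
    _ ≤ (x ^ n ⊔ y) ^ k := pow_le_pow_left' ((sup_pow_le y x n).trans_eq (sup_comm _ _)) k
    _ ≤ x ^ n ⊔ y ^ k := sup_pow_le _ _ k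

namespace IsFilter

variable {F : Set A}

theorem mul_mem (hF : IsFilter F) {x y : A} (hx : x ∈ F) (hy : y ∈ F) : x * y ∈ F :=
  hF.2.1 x hx y hy

theorem mem_of_le (hF : IsFilter F) {x y : A} (hx : x ∈ F) (hxy : x ≤ y) : y ∈ F := by
  simpa only [sup_eq_right.mpr hxy] using hF.2.2 x hx y

theorem top_mem (hF : IsFilter F) : ⊤ ∈ F :=
  hF.1.elim fun _ hx ↦ hF.mem_of_le hx le_top

theorem pow_mem (hF : IsFilter F) {x : A} (hx : x ∈ F) (n : ℕ) : x ^ n ∈ F := by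
  induction n with
  | zero => rw [pow_zero]; exact hF.top_mem
  | succ n ih => rw [pow_succ]; exact hF.mul_mem ih hx

end IsFilter

theorem isFilter_fgen (X : Set A) : IsFilter (Fgen X) :=
  ⟨⟨⊤, fun _ hG ↦ hG.1.top_mem⟩,
    fun _ hx _ hy G hG ↦ hG.1.mul_mem (hx G hG) (hy G hG),
    fun _ hx y G hG ↦ hG.1.2.2 _ (hx G hG) y⟩

theorem subset_fgen (X : Set A) : X ⊆ Fgen X :=
  fun _ hx _ hG ↦ hG.2 hx

theorem fgen_subset {X F : Set A} (hF : IsFilter F) (hXF : X ⊆ F) : Fgen X ⊆ F :=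
  Set.sInter_subset_of_mem ⟨hF, hXF⟩

theorem isFilter_sUnion {c : Set (Set A)} (hc : ∀ G ∈ c, IsFilter G)
    (hchain : IsChain (· ⊆ ·) c) (hne : c.Nonempty) : IsFilter (⋃₀ c) := by
  obtain ⟨G, hG⟩ := hne
  refine ⟨⟨⊤, G, hG, (hc G hG).top_mem⟩, ?_, ?_⟩
  · rintro x ⟨G₁, hG₁, hx⟩ y ⟨G₂, hG₂, hy⟩
    rcases hchain.total hG₁ hG₂ with h | h
    · exact ⟨G₂, hG₂, (hc G₂ hG₂).mul_mem (h hx) hy⟩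
    · exact ⟨G₁, hG₁, (hc G₁ hG₁).mul_mem hx (h hy)⟩
  · rintro x ⟨G₁, hG₁, hx⟩ y
    exact ⟨G₁, hG₁, (hc G₁ hG₁).2.2 x hx y⟩

/-- The filter generated by `M ∪ {x}`, when `M` is a filter. -/
def adjoin (M : Set A) (x : A) : Set A := {z | ∃ p ∈ M, ∃ n : ℕ, p * x ^ n ≤ z}

theorem subset_adjoin (M : Set A) (x : A) : M ⊆ adjoin M x :=
  fun p hp ↦ ⟨p, hp, 0, by rw [pow_zero, mul_one]⟩

theorem mem_adjoin_self {M : Set A} (hM : IsFilter M) (x : A) : x ∈ adjoin M x :=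
  ⟨⊤, hM.top_mem, 1, mul_le_right _ _ |>.trans_eq (pow_one x)⟩

theorem IsFilter.adjoin {M : Set A} (hM : IsFilter M) (x : A) : IsFilter (adjoin M x) := by
  refine ⟨⟨x, mem_adjoin_self hM x⟩, ?_, ?_⟩
  · rintro z₁ ⟨p₁, hp₁, n₁, h₁⟩ z₂ ⟨p₂, hp₂, n₂, h₂⟩
    refine ⟨p₁ * p₂, hM.mul_mem hp₁ hp₂, n₁ + n₂, ?_⟩
    calc p₁ * p₂ * x ^ (n₁ + n₂) = p₁ * x ^ n₁ * (p₂ * x ^ n₂) := by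
          rw [pow_add, mul_mul_mul_comm]
      _ ≤ z₁ * z₂ := mul_le_mul' h₁ h₂
  · rintro z ⟨p, hp, n, h⟩ w
    exact ⟨p, hp, n, h.trans le_sup_left⟩

theorem isPrime_of_maximal {m : Set A} {a : A} (hm : Maximal (fun G ↦ IsFilter G ∧ a ∉ G) m) :
    IsPrime m := by
  obtain ⟨⟨hmF, ham⟩, hmax⟩ := hm
  have witness : ∀ x ∉ m, ∃ p ∈ m, ∃ n : ℕ, p * x ^ n ≤ a := by
    intro x hx
    by_contra hna
    exact hx (hmax ⟨hmF.adjoin x, hna⟩ (subset_adjoin m x) (mem_adjoin_self hmF x))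
  refine ⟨hmF, fun h ↦ ham (h ▸ Set.mem_univ a), fun x y hxy ↦ ?_⟩
  by_contra! ⟨hx, hy⟩
  obtain ⟨p, hp, n, hpa⟩ := witness x hx
  obtain ⟨q, hq, k, hqa⟩ := witness y hy
  refine ham (hmF.mem_of_le (hmF.mul_mem (hmF.mul_mem hp hq) (hmF.pow_mem hxy (n * k))) ?_)
  calc p * q * (x ⊔ y) ^ (n * k) ≤ p * q * (x ^ n ⊔ y ^ k) :=
        mul_le_mul_right (sup_pow_mul_le x y n k) _
    _ = p * q * x ^ n ⊔ p * q * y ^ k := mul_sup _ _ _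
    _ ≤ a := sup_le (le_trans (mul_le_mul_left (mul_le_left p q) _) hpa)
        (le_trans (mul_le_mul_left (mul_le_right p q) _) hqa)

theorem exists_isPrime_of_notMem {F : Set A} {a : A} (hF : IsFilter F) (ha : a ∉ F) :
    ∃ P, IsPrime P ∧ F ⊆ P ∧ a ∉ P := by
  obtain ⟨m, hFm, hm⟩ := zorn_subset_nonempty {G : Set A | IsFilter G ∧ a ∉ G}
    (fun c hc hchain hne ↦ ⟨⋃₀ c, ⟨isFilter_sUnion (fun G hG ↦ (hc hG).1) hchain hne,
      fun ⟨G, hG, haG⟩ ↦ (hc hG).2 haG⟩, fun _ ↦ Set.subset_sUnion_of_mem⟩) F ⟨hF, ha⟩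
  exact ⟨m, isPrime_of_maximal hm, hFm, hm.prop.2⟩

end RL

theorem fgen_eq_sInter_primes {A : Type u} [ResiduatedLattice A] (X : Set A) :
    RL.Fgen X = ⋂₀ {P : Set A | RL.IsPrime P ∧ X ⊆ P} := by
  refine subset_antisymm (fun b hb P hP ↦ RL.fgen_subset hP.1.1 hP.2 hb) fun a ha ↦ ?_
  by_contra haX
  obtain ⟨P, hP, hXP, haP⟩ := RL.exists_isPrime_of_notMem (RL.isFilter_fgen X) haX
  exact haP (ha P ⟨hP, (RL.subset_fgen X).trans hXP⟩)
end

section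
/- Let F be a filter and P a prime filter of a residuated lattice. Then the set of D_F(P)-minimal prime filters equals the set of F-minimal prime filters contained in P. -/
universe u

namespace RLAux

open RL

variable {A : Type u} [ResiduatedLattice A]

local infixl:70 " ⊙ " => ResiduatedLattice.mul

lemma mulr_mono {x y z : A} (h : y ≤ z) : x ⊙ y ≤ x ⊙ z := by
  have h1 : z ⊙ x ≤ x ⊙ z := le_of_eq (ResiduatedLattice.mul_comm z x)
  have h2 : z ≤ ResiduatedLattice.himp x (x ⊙ z) :=
    (ResiduatedLattice.adjoint z x (x ⊙ z)).mp h1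
  have h3 := (ResiduatedLattice.adjoint y x (x ⊙ z)).mpr (le_trans h h2)
  calc x ⊙ y = y ⊙ x := ResiduatedLattice.mul_comm x y
    _ ≤ x ⊙ z := h3

lemma mull_mono {x y z : A} (h : y ≤ z) : y ⊙ x ≤ z ⊙ x := by
  rw [ResiduatedLattice.mul_comm y x, ResiduatedLattice.mul_comm z x]
  exact mulr_mono h

lemma mul_le_left (x y : A) : x ⊙ y ≤ x := by
  have := mulr_mono (x := x) (le_top (a := y))
  rwa [ResiduatedLattice.mul_top] at this

lemma mul_le_right (x y : A) : x ⊙ y ≤ y := by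
  rw [ResiduatedLattice.mul_comm]; exact mul_le_left y x

lemma mul_sup (x y z : A) : x ⊙ (y ⊔ z) = (x ⊙ y) ⊔ (x ⊙ z) := by
  apply le_antisymm
  · rw [ResiduatedLattice.mul_comm]
    apply (ResiduatedLattice.adjoint _ _ _).mpr
    apply sup_le
    · apply (ResiduatedLattice.adjoint _ _ _).mp
      rw [ResiduatedLattice.mul_comm]; exact le_sup_left
    · apply (ResiduatedLattice.adjoint _ _ _).mp
      rw [ResiduatedLattice.mul_comm]; exact le_sup_right
  · exact sup_le (mulr_mono le_sup_left) (mulr_mono le_sup_right)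

/-- powers -/
def pw (x : A) : ℕ → A
  | 0 => ⊤
  | n + 1 => x ⊙ pw x n

lemma top_mul (x : A) : (⊤ : A) ⊙ x = x := by
  rw [ResiduatedLattice.mul_comm, ResiduatedLattice.mul_top]

lemma pw_add (x : A) (m n : ℕ) : pw x (m + n) = pw x m ⊙ pw x n := by
  induction m with
  | zero => simp [pw, top_mul]
  | succ m ih =>
    have : m + 1 + n = (m + n) + 1 := by omega
    rw [this]
    show x ⊙ pw x (m + n) = (x ⊙ pw x m) ⊙ pw x n
    rw [ih, ResiduatedLattice.mul_assoc]

lemma pw_sup_le_aux (x y : A) : ∀ k m n, m + n = k →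
    pw (x ⊔ y) (m + n) ≤ pw x m ⊔ pw y n := by
  intro k
  induction k with
  | zero =>
    intro m n h
    have hm : m = 0 := by omega
    have hn : n = 0 := by omega
    subst hm; subst hn
    exact le_sup_left.trans_eq' rfl
  | succ k ih =>
    intro m n h
    match m, n with
    | 0, n =>
      show pw (x ⊔ y) (0 + n) ≤ pw x 0 ⊔ pw y n
      exact le_trans le_top le_sup_left
    | m + 1, 0 =>
      exact le_trans le_top le_sup_right
    | m + 1, n + 1 =>
      have e : m + 1 + (n + 1) = (m + (n + 1)) + 1 := by omega
      rw [e]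
      show (x ⊔ y) ⊙ pw (x ⊔ y) (m + (n + 1)) ≤ pw x (m + 1) ⊔ pw y (n + 1)
      have h1 : pw (x ⊔ y) (m + (n + 1)) ≤ pw x m ⊔ pw y (n + 1) := ih m (n + 1) (by omega)
      have h2 : pw (x ⊔ y) ((m + 1) + n) ≤ pw x (m + 1) ⊔ pw y n := ih (m + 1) n (by omega)
      have e2 : m + (n + 1) = (m + 1) + n := by omega
      calc (x ⊔ y) ⊙ pw (x ⊔ y) (m + (n + 1))
          = (pw (x ⊔ y) (m + (n + 1))) ⊙ (x ⊔ y) := ResiduatedLattice.mul_comm _ _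
        _ = (pw (x ⊔ y) (m + (n + 1))) ⊙ x ⊔ (pw (x ⊔ y) (m + (n + 1))) ⊙ y := mul_sup _ _ _
        _ ≤ pw x (m + 1) ⊔ pw y (n + 1) := by
            apply sup_le
            · have : (pw (x ⊔ y) (m + (n + 1))) ⊙ x ≤ (pw x m ⊔ pw y (n + 1)) ⊙ x :=
                mull_mono h1
              refine le_trans this ?_
              rw [ResiduatedLattice.mul_comm, mul_sup]
              apply sup_le
              · exact le_sup_left.trans_eq' rfl
              · exact le_trans (mul_le_right _ _) (le_sup_right.trans_eq' rfl)
            · have : (pw (x ⊔ y) (m + (n + 1))) ⊙ y ≤ (pw x (m + 1) ⊔ pw y n) ⊙ y := by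
                rw [e2]; exact mull_mono h2
              refine le_trans this ?_
              rw [ResiduatedLattice.mul_comm, mul_sup]
              apply sup_le
              · exact le_trans (mul_le_right _ _) le_sup_left
              · exact le_sup_right.trans_eq' rfl

lemma pw_sup_le (x y : A) (m n : ℕ) : pw (x ⊔ y) (m + n) ≤ pw x m ⊔ pw y n :=
  pw_sup_le_aux x y (m + n) m n rfl

lemma filt_up {F : Set A} (hF : IsFilter F) {x z : A} (hx : x ∈ F) (h : x ≤ z) : z ∈ F := by
  have := hF.2.2 x hx z
  rwa [sup_eq_right.mpr h] at this

lemma top_mem {F : Set A} (hF : IsFilter F) : (⊤ : A) ∈ F := by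
  obtain ⟨x, hx⟩ := hF.1
  exact filt_up hF hx le_top

lemma pw_mem {F : Set A} (hF : IsFilter F) {x : A} (hx : x ∈ F) (n : ℕ) : pw x n ∈ F := by
  induction n with
  | zero => exact top_mem hF
  | succ n ih => exact hF.2.1 x hx _ ih

lemma mem_DF {F P : Set A} {a : A} : a ∈ DF F P ↔ ∃ b, a ⊔ b ∈ F ∧ b ∉ P := by
  unfold DF coann
  rw [Set.mem_setOf_eq, Set.not_subset]
  constructor
  · rintro ⟨b, hb, hbP⟩
    exact ⟨b, hb a (Set.mem_singleton a), hbP⟩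
  · rintro ⟨b, hb, hbP⟩
    refine ⟨b, ?_, hbP⟩
    intro x hx
    rw [Set.mem_singleton_iff] at hx
    subst hx; exact hb

/-- The prime separation lemma. -/
lemma separation {G C : Set A} (hG : IsFilter G) (hC : VClosed C)
    (hdisj : ∀ c ∈ C, c ∉ G) :
    ∃ Q : Set A, IsPrime Q ∧ G ⊆ Q ∧ ∀ c ∈ C, c ∉ Q := by
  set S : Set (Set A) := {H | IsFilter H ∧ G ⊆ H ∧ ∀ c ∈ C, c ∉ H} with hS
  have hGS : G ∈ S := ⟨hG, subset_rfl, hdisj⟩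
  have chainub : ∀ c ⊆ S, IsChain (· ⊆ ·) c → c.Nonempty → ∃ ub ∈ S, ∀ s ∈ c, s ⊆ ub := by
    intro c hcS hchain hcne
    refine ⟨⋃₀ c, ⟨⟨?_, ?_, ?_⟩, ?_, ?_⟩, fun s hs => Set.subset_sUnion_of_mem hs⟩
    · obtain ⟨H, hH⟩ := hcne
      obtain ⟨x, hx⟩ := (hcS hH).1.1
      exact ⟨x, H, hH, hx⟩
    · rintro x ⟨H1, hH1, hx⟩ y ⟨H2, hH2, hy⟩
      rcases hchain.total hH1 hH2 with h | h
      · exact ⟨H2, hH2, (hcS hH2).1.2.1 x (h hx) y hy⟩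
      · exact ⟨H1, hH1, (hcS hH1).1.2.1 x hx y (h hy)⟩
    · rintro x ⟨H1, hH1, hx⟩ y
      exact ⟨H1, hH1, (hcS hH1).1.2.2 x hx y⟩
    · obtain ⟨H, hH⟩ := hcne
      exact ((hcS hH).2.1).trans (Set.subset_sUnion_of_mem hH)
    · rintro a ha ⟨H1, hH1, hx⟩
      exact (hcS hH1).2.2 a ha hx
  obtain ⟨Q, -, hQmax⟩ := zorn_subset_nonempty S chainub G hGS
  obtain ⟨⟨hQfilt, hGQ, hQC⟩, hmax⟩ := hQmax
  obtain ⟨c0, hc0⟩ := hC.1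
  refine ⟨Q, ⟨hQfilt, ?_, ?_⟩, hGQ, hQC⟩
  · intro h
    exact hQC c0 hc0 (h ▸ Set.mem_univ c0)
  · -- primality
    intro x y hxy
    by_contra hcon
    push_neg at hcon
    obtain ⟨hxQ, hyQ⟩ := hcon
    -- the filter generated by Q and an element z
    have key : ∀ z : A, z ∉ Q → ∃ c ∈ C, ∃ q ∈ Q, ∃ n : ℕ, q ⊙ pw z n ≤ c := by
      intro z hzQ
      set H : Set A := {w | ∃ q ∈ Q, ∃ n : ℕ, q ⊙ pw z n ≤ w} with hHdef
      have hHfilt : IsFilter H := by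
        refine ⟨⟨⊤, ⊤, top_mem hQfilt, 0, le_top⟩, ?_, ?_⟩
        · rintro a ⟨q1, hq1, n1, h1⟩ b ⟨q2, hq2, n2, h2⟩
          refine ⟨q1 ⊙ q2, hQfilt.2.1 q1 hq1 q2 hq2, n1 + n2, ?_⟩
          have : (q1 ⊙ q2) ⊙ pw z (n1 + n2) = (q1 ⊙ pw z n1) ⊙ (q2 ⊙ pw z n2) := by
            rw [pw_add]
            rw [ResiduatedLattice.mul_assoc q1 q2 _,
              ← ResiduatedLattice.mul_assoc q2 (pw z n1) (pw z n2),
              ResiduatedLattice.mul_comm q2 (pw z n1),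
              ResiduatedLattice.mul_assoc (pw z n1) q2 (pw z n2),
              ← ResiduatedLattice.mul_assoc q1 (pw z n1) _]
          rw [this]
          exact le_trans (mull_mono h1) (mulr_mono h2)
        · rintro a ⟨q1, hq1, n1, h1⟩ b
          exact ⟨q1, hq1, n1, le_trans h1 le_sup_left⟩
      have hQH : Q ⊆ H := by
        intro q hq
        refine ⟨q, hq, 0, ?_⟩
        show q ⊙ ⊤ ≤ q
        rw [ResiduatedLattice.mul_top]
      have hzH : z ∈ H := by
        refine ⟨⊤, top_mem hQfilt, 1, ?_⟩
        show ⊤ ⊙ (z ⊙ ⊤) ≤ z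
        rw [top_mul, ResiduatedLattice.mul_top]
      have hHnotS : H ∉ S := by
        intro hHS
        exact hzQ (hmax hHS hQH hzH)
      rw [hS, Set.mem_setOf_eq] at hHnotS
      push_neg at hHnotS
      obtain ⟨c, hcC, hcH⟩ := hHnotS hHfilt (hGQ.trans hQH)
      exact ⟨c, hcC, hcH⟩
    obtain ⟨c1, hc1C, q1, hq1, n1, h1⟩ := key x hxQ
    obtain ⟨c2, hc2C, q2, hq2, n2, h2⟩ := key y hyQ
    have hq : q1 ⊙ q2 ∈ Q := hQfilt.2.1 q1 hq1 q2 hq2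
    have hpw : pw (x ⊔ y) (n1 + n2) ∈ Q := pw_mem hQfilt hxy _
    have hQmem : (q1 ⊙ q2) ⊙ pw (x ⊔ y) (n1 + n2) ∈ Q := hQfilt.2.1 _ hq _ hpw
    have hle : (q1 ⊙ q2) ⊙ pw (x ⊔ y) (n1 + n2) ≤ c1 ⊔ c2 := by
      calc (q1 ⊙ q2) ⊙ pw (x ⊔ y) (n1 + n2)
          ≤ (q1 ⊙ q2) ⊙ (pw x n1 ⊔ pw y n2) := mulr_mono (pw_sup_le x y n1 n2)
        _ = (q1 ⊙ q2) ⊙ pw x n1 ⊔ (q1 ⊙ q2) ⊙ pw y n2 := mul_sup _ _ _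
        _ ≤ (q1 ⊙ pw x n1) ⊔ (q2 ⊙ pw y n2) :=
            sup_le_sup (mull_mono (mul_le_left q1 q2)) (mull_mono (mul_le_right q1 q2))
        _ ≤ c1 ⊔ c2 := sup_le_sup h1 h2
    have : c1 ⊔ c2 ∈ Q := filt_up hQfilt hQmem hle
    exact hQC _ (hC.2 c1 hc1C c2 hc2C) this

theorem main {A : Type u} [ResiduatedLattice A] (F P : Set A)
    (hF : RL.IsFilter F) (hP : RL.IsPrime P) :
    {m : Set A | RL.MinPrimeOver (RL.DF F P) m} =
      {m : Set A | RL.MinPrimeOver F m ∧ m ⊆ P} := by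
  have hFD : F ⊆ DF F P := by
    intro a ha
    rw [mem_DF]
    obtain ⟨b, hbP⟩ := Set.ne_univ_iff_exists_notMem P |>.mp hP.2.1
    exact ⟨b, hF.2.2 a ha b, hbP⟩
  ext m
  simp only [Set.mem_setOf_eq]
  constructor
  · intro hm
    by_cases hFP : F ⊆ P
    · -- DF F P is a filter
      have hDfilt : IsFilter (DF F P) := by
        refine ⟨hF.1.mono hFD, ?_, ?_⟩
        · intro a ha a' ha'
          rw [mem_DF] at ha ha' ⊢
          obtain ⟨b, hab, hbP⟩ := ha
          obtain ⟨b', hab', hbP'⟩ := ha'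
          refine ⟨b ⊔ b', ?_, ?_⟩
          · have hmem : (a ⊔ b) ⊙ (a' ⊔ b') ∈ F := hF.2.1 _ hab _ hab'
            refine filt_up hF hmem ?_
            rw [mul_sup, ResiduatedLattice.mul_comm (a ⊔ b) a',
              ResiduatedLattice.mul_comm (a ⊔ b) b', mul_sup, mul_sup]
            apply sup_le
            · apply sup_le
              · rw [ResiduatedLattice.mul_comm a' a]; exact le_sup_left
              · exact le_trans (mul_le_right a' b) (le_trans le_sup_left le_sup_right)
            · apply sup_le
              · exact le_trans (mul_le_left b' a) (le_trans le_sup_right le_sup_right)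
              · exact le_trans (mul_le_left b' b) (le_trans le_sup_right le_sup_right)
          · intro hcon
            rcases hP.2.2 b b' hcon with h | h
            · exact hbP h
            · exact hbP' h
        · intro a ha y
          rw [mem_DF] at ha ⊢
          obtain ⟨b, hab, hbP⟩ := ha
          refine ⟨b, filt_up hF hab ?_, hbP⟩
          exact sup_le_sup_right le_sup_left b
      -- the ∨-closed set
      set C : Set A := {w | ∃ u v, u ∉ m ∧ v ∉ P ∧ w = u ⊔ v} with hCdef
      obtain ⟨u0, hu0⟩ := Set.ne_univ_iff_exists_notMem m |>.mp hm.1.2.1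
      obtain ⟨v0, hv0⟩ := Set.ne_univ_iff_exists_notMem P |>.mp hP.2.1
      have hCv : VClosed C := by
        constructor
        · exact ⟨u0 ⊔ v0, u0, v0, hu0, hv0, rfl⟩
        · rintro w ⟨u, v, hu, hv, rfl⟩ w' ⟨u', v', hu', hv', rfl⟩
          refine ⟨u ⊔ u', v ⊔ v', ?_, ?_, sup_sup_sup_comm u v u' v'⟩
          · intro hcon
            rcases hm.1.2.2 u u' hcon with h | h
            · exact hu h
            · exact hu' h
          · intro hcon
            rcases hP.2.2 v v' hcon with h | h
            · exact hv h
            · exact hv' h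
      have hdisj : ∀ c ∈ C, c ∉ DF F P := by
        rintro c ⟨u, v, hu, hv, rfl⟩ hc
        rw [mem_DF] at hc
        obtain ⟨b, hb, hbP⟩ := hc
        -- u ⊔ (v ⊔ b) ∈ F, v ⊔ b ∉ P, so u ∈ DF F P ⊆ m
        have hu' : u ∈ DF F P := by
          rw [mem_DF]
          refine ⟨v ⊔ b, ?_, ?_⟩
          · rw [← sup_assoc]; exact hb
          · intro hcon
            rcases hP.2.2 v b hcon with h | h
            · exact hv h
            · exact hbP h
        exact hu (hm.2.1 hu')
      obtain ⟨Q, hQprime, hDQ, hQC⟩ := separation hDfilt hCv hdisj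
      have hQm : Q ⊆ m := by
        intro q hq
        by_contra hqm
        exact hQC (q ⊔ v0) ⟨q, v0, hqm, hv0, rfl⟩ (hQprime.1.2.2 q hq v0)
      have hQP : Q ⊆ P := by
        intro q hq
        by_contra hqP
        have : u0 ⊔ q ∈ Q := by
          rw [sup_comm]; exact hQprime.1.2.2 q hq u0
        exact hQC (u0 ⊔ q) ⟨u0, q, hu0, hqP, rfl⟩ this
      have hQeq : Q = m := hm.2.2 Q hQprime hDQ hQm
      have hmP : m ⊆ P := hQeq ▸ hQP
      refine ⟨⟨hm.1, hFD.trans hm.2.1, ?_⟩, hmP⟩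
      intro Q' hQ' hFQ' hQ'm
      apply hm.2.2 Q' hQ' ?_ hQ'm
      intro a ha
      rw [mem_DF] at ha
      obtain ⟨b, hab, hbP⟩ := ha
      have hbQ' : b ∉ Q' := fun h => hbP (hmP (hQ'm h))
      rcases hQ'.2.2 a b (hFQ' hab) with h | h
      · exact h
      · exact absurd h hbQ'
    · -- F ⊄ P : DF F P = univ, contradiction
      exfalso
      obtain ⟨f, hfF, hfP⟩ := Set.not_subset.mp hFP
      have : (Set.univ : Set A) ⊆ m := by
        intro a _
        apply hm.2.1
        rw [mem_DF]
        have : f ⊔ a ∈ F := hF.2.2 f hfF a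
        exact ⟨f, by rwa [sup_comm], hfP⟩
      exact hm.1.2.1 (Set.eq_univ_of_univ_subset this)
  · rintro ⟨hmF, hmP⟩
    have hDm : DF F P ⊆ m := by
      intro a ha
      rw [mem_DF] at ha
      obtain ⟨b, hab, hbP⟩ := ha
      rcases hmF.1.2.2 a b (hmF.2.1 hab) with h | h
      · exact h
      · exact absurd (hmP h) hbP
    refine ⟨hmF.1, hDm, ?_⟩
    intro Q hQ hDQ hQm
    exact hmF.2.2 Q hQ (hFD.trans hDQ) hQm

end RLAux

theorem minPrimeOver_DF {A : Type u} [ResiduatedLattice A] (F P : Set A)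
    (hF : RL.IsFilter F) (hP : RL.IsPrime P) :
    {m : Set A | RL.MinPrimeOver (RL.DF F P) m} =
      {m : Set A | RL.MinPrimeOver F m ∧ m ⊆ P} := by
  exact RLAux.main F P hF hP
end
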